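/- The function u₂ := ∂_t²u satisfies, for all x ∈ Ω and 0 < t < T, ∂_t²u₂(x,t) = (Au₂)(x,t) + ∫₀ᵗ Σ_{|α|≤2} b_α^{(2)}(x,t,η) ∂_x^α u₂(x,η) dη + (∂_t²R)(x,t) f(x), together with the initial conditions u₂(x,0) = R(x,0) f(x) and ∂_t u₂(x,0) = (∂_t R)(x,0) f(x) for all x ∈ Ω. -/

import Mathlib

open MeasureTheory

noncomputable def pd {n : ℕ} (i : Fin n) (v : (Fin n → ℝ) → ℝ) (x : Fin n → ℝ) : ℝ :=
  fderiv ℝ v x (Pi.single i 1)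

noncomputable def opA {n : ℕ} (a : Fin n → Fin n → (Fin n → ℝ) → ℝ)
    (v : (Fin n → ℝ) → ℝ) (x : Fin n → ℝ) : ℝ :=
  ∑ i, ∑ j, pd i (fun y => a i j y * pd j v y) x

noncomputable def tder {n : ℕ} (k : ℕ) (u : (Fin n → ℝ) → ℝ → ℝ)
    (x : Fin n → ℝ) (t : ℝ) : ℝ :=
  deriv^[k] (fun s => u x s) t

noncomputable def memTerm {n : ℕ}
    (b0 : (Fin n → ℝ) → ℝ → ℝ → ℝ)
    (b1 : Fin n → (Fin n → ℝ) → ℝ → ℝ → ℝ)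
    (b2 : Fin n → Fin n → (Fin n → ℝ) → ℝ → ℝ → ℝ)
    (u : (Fin n → ℝ) → ℝ → ℝ) (x : Fin n → ℝ) (t : ℝ) : ℝ :=
  ∫ η in (0:ℝ)..t,
    (b0 x t η * u x η + (∑ i, b1 i x t η * pd i (fun y => u y η) x)
      + ∑ i, ∑ j, b2 i j x t η * pd i (pd j (fun y => u y η)) x)

noncomputable def energy {n : ℕ} (Ω : Set (Fin n → ℝ))
    (a : Fin n → Fin n → (Fin n → ℝ) → ℝ)
    (v : (Fin n → ℝ) → ℝ → ℝ) (t : ℝ) : ℝ :=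
  ∫ x in Ω, ((tder 1 v x t) ^ 2
    + ∑ i, ∑ j, a i j x * pd i (fun y => v y t) x * pd j (fun y => v y t) x)

def CoeffOK {n : ℕ} (a : Fin n → Fin n → (Fin n → ℝ) → ℝ) : Prop :=
  (∀ i j x, a i j x = a j i x) ∧
  (∀ i j, ContDiff ℝ 1 (a i j)) ∧
  (∃ M : ℝ, ∀ i j x, |a i j x| ≤ M ∧ ‖fderiv ℝ (a i j) x‖ ≤ M) ∧
  (∃ μ₀ > (0:ℝ), ∀ x ξ : Fin n → ℝ,
    μ₀ * (∑ i, ξ i ^ 2) ≤ ∑ i, ∑ j, a i j x * ξ i * ξ j)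

def SmoothBdd3 {n : ℕ} (b : (Fin n → ℝ) → ℝ → ℝ → ℝ) : Prop :=
  ContDiff ℝ (⊤ : ℕ∞) (fun p : (Fin n → ℝ) × ℝ × ℝ => b p.1 p.2.1 p.2.2) ∧
  ∀ k : ℕ, ∃ M : ℝ, ∀ p : (Fin n → ℝ) × ℝ × ℝ,
    ‖iteratedFDeriv ℝ k (fun q : (Fin n → ℝ) × ℝ × ℝ => b q.1 q.2.1 q.2.2) p‖ ≤ M

def SmoothBdd2 {n : ℕ} (R : (Fin n → ℝ) → ℝ → ℝ) : Prop :=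
  ContDiff ℝ (⊤ : ℕ∞) (fun p : (Fin n → ℝ) × ℝ => R p.1 p.2) ∧
  ∀ k : ℕ, ∃ M : ℝ, ∀ p : (Fin n → ℝ) × ℝ,
    ‖iteratedFDeriv ℝ k (fun q : (Fin n → ℝ) × ℝ => R q.1 q.2) p‖ ≤ M

noncomputable def ker1 {n : ℕ} (b : (Fin n → ℝ) → ℝ → ℝ → ℝ)
    (x : Fin n → ℝ) (t η : ℝ) : ℝ :=
  b x t t + ∫ ξ in η..t, deriv (fun s => b x s ξ) t

noncomputable def L2n {n : ℕ} (Ω : Set (Fin n → ℝ)) (v : (Fin n → ℝ) → ℝ) : ℝ :=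
  Real.sqrt (∫ x in Ω, (v x) ^ 2)

noncomputable def H1n {n : ℕ} (Ω : Set (Fin n → ℝ)) (v : (Fin n → ℝ) → ℝ) : ℝ :=
  Real.sqrt (∫ x in Ω, ((v x) ^ 2 + ∑ i, (pd i v x) ^ 2))

noncomputable def H2n {n : ℕ} (Ω : Set (Fin n → ℝ)) (v : (Fin n → ℝ) → ℝ) : ℝ :=
  Real.sqrt (∫ x in Ω, ((v x) ^ 2 + (∑ i, (pd i v x) ^ 2)
    + ∑ i, ∑ j, (pd i (pd j v) x) ^ 2))

/-! ### Auxiliary infrastructure -/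

section Gen
variable {E : Type*} [NormedAddCommGroup E] [NormedSpace ℝ E]

noncomputable def dV (v : E) (f : E → ℝ) (p : E) : ℝ := fderiv ℝ f p v

theorem ContDiff.diffble {F : Type*} [NormedAddCommGroup F] [NormedSpace ℝ F]
    {f : E → F} (hf : ContDiff ℝ (⊤:ℕ∞) f) : Differentiable ℝ f :=
  hf.differentiable (by simp)

theorem ContDiff.dV' {f : E → ℝ} (hf : ContDiff ℝ (⊤:ℕ∞) f) (v : E) :
    ContDiff ℝ (⊤:ℕ∞) (dV v f) :=
  (ContinuousLinearMap.apply ℝ ℝ v).contDiff.comp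
    (hf.fderiv_right (m := (⊤:ℕ∞)) (by exact_mod_cast le_top))

theorem hasDerivAt_line {f : E → ℝ} (hf : Differentiable ℝ f) (p v : E) (t : ℝ) :
    HasDerivAt (fun s : ℝ => f (p + s • v)) (dV v f (p + t • v)) t := by
  have hc : HasDerivAt (fun s : ℝ => p + s • v) v t := by
    simpa using ((hasDerivAt_id t).smul_const v).const_add p
  exact (hf (p + t • v)).hasFDerivAt.comp_hasDerivAt t hc

theorem dV_swap {f : E → ℝ} (hf : ContDiff ℝ (⊤:ℕ∞) f) (v w : E) (p : E) :
    dV w (dV v f) p = dV v (dV w f) p := by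
  have hder : ∀ y, HasFDerivAt f (fderiv ℝ f y) y :=
    fun y => (hf.diffble y).hasFDerivAt
  have hf' : HasFDerivAt (fderiv ℝ f) (fderiv ℝ (fderiv ℝ f) p) p :=
    ((hf.fderiv_right (m := (⊤:ℕ∞)) (by exact_mod_cast le_top)).diffble p).hasFDerivAt
  have hsymm := second_derivative_symmetric hder hf' v w
  have h1 : ∀ a b : E, dV b (dV a f) p = fderiv ℝ (fderiv ℝ f) p b a := by
    intro a b
    have h2 : HasFDerivAt (dV a f)
        ((ContinuousLinearMap.apply ℝ ℝ a).comp (fderiv ℝ (fderiv ℝ f) p)) p :=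
      (ContinuousLinearMap.apply ℝ ℝ a).hasFDerivAt.comp p hf'
    simp [dV, h2.fderiv]
  rw [h1 v w, h1 w v, hsymm]

theorem deriv_iter_line {f : E → ℝ} (hf : ContDiff ℝ (⊤:ℕ∞) f) (k : ℕ) (p v : E) (t : ℝ) :
    deriv^[k] (fun s : ℝ => f (p + s • v)) t = ((dV v)^[k] f) (p + t • v) := by
  induction k generalizing f with
  | zero => simp
  | succ k ih =>
    rw [Function.iterate_succ_apply, Function.iterate_succ_apply]
    have h : deriv (fun s : ℝ => f (p + s • v)) = fun s => dV v f (p + s • v) :=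
      funext fun s => (hasDerivAt_line hf.diffble p v s).deriv
    rw [h]
    exact ih (hf.dV' v)

theorem slice_eq (f : E × ℝ → ℝ) (x : E) :
    (fun s : ℝ => f (x, s)) = fun s : ℝ => f ((x, 0) + s • ((0 : E), (1:ℝ))) := by
  funext s; congr 1; simp [Prod.ext_iff]

theorem pt_eq (x : E) (t : ℝ) : (x, (0:ℝ)) + t • ((0 : E), (1:ℝ)) = (x, t) := by
  simp [Prod.ext_iff]

theorem hasDerivAt_slice {f : E × ℝ → ℝ} (hf : Differentiable ℝ f) (x : E) (t : ℝ) :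
    HasDerivAt (fun s => f (x, s)) (dV ((0:E),(1:ℝ)) f (x, t)) t := by
  have h := hasDerivAt_line hf (x, (0:ℝ)) ((0:E),(1:ℝ)) t
  rw [pt_eq] at h
  rw [slice_eq f x]
  exact h

theorem deriv_iter_slice {f : E × ℝ → ℝ} (hf : ContDiff ℝ (⊤:ℕ∞) f) (k : ℕ) (x : E) (t : ℝ) :
    deriv^[k] (fun s : ℝ => f (x, s)) t = ((dV ((0:E),(1:ℝ)))^[k] f) (x, t) := by
  rw [slice_eq f x, deriv_iter_line hf k, pt_eq]

end Gen

theorem pd_slice {n : ℕ} {f : ((Fin n → ℝ)) × ℝ → ℝ} {x : Fin n → ℝ} {t : ℝ}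
    (hf : DifferentiableAt ℝ f (x, t)) (i : Fin n) :
    pd i (fun y => f (y, t)) x = dV ((Pi.single i 1 : Fin n → ℝ), (0:ℝ)) f (x, t) := by
  have h : HasFDerivAt (fun y => f (y, t))
      ((fderiv ℝ f (x, t)).comp (ContinuousLinearMap.inl ℝ _ ℝ)) x :=
    hf.hasFDerivAt.comp x (hasFDerivAt_prodMk_left x t)
  simp [pd, h.fderiv, dV]

theorem tder_eq {n : ℕ} (u : (Fin n → ℝ) → ℝ → ℝ)
    (hu : ContDiff ℝ (⊤:ℕ∞) (fun p : (Fin n → ℝ) × ℝ => u p.1 p.2)) (k : ℕ)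
    (x : Fin n → ℝ) (t : ℝ) :
    tder k u x t
      = ((dV ((0:Fin n→ℝ),(1:ℝ)))^[k] (fun p : (Fin n→ℝ)×ℝ => u p.1 p.2)) (x, t) :=
  deriv_iter_slice hu k x t
/-! ### Kernel Leibniz rule -/

structure NiceKer (k k' : ℝ → ℝ → ℝ) : Prop where
  cont : Continuous fun p : ℝ × ℝ => k p.1 p.2
  hder : ∀ t η, HasDerivAt (fun s => k s η) (k' t η) t
  cont' : Continuous fun p : ℝ × ℝ => k' p.1 p.2

theorem NiceKer.cont_right {k k' : ℝ → ℝ → ℝ} (hk : NiceKer k k') (s : ℝ) :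
    Continuous fun η => k s η :=
  hk.cont.comp (continuous_const.prodMk continuous_id)

theorem NiceKer.cont'_right {k k' : ℝ → ℝ → ℝ} (hk : NiceKer k k') (s : ℝ) :
    Continuous fun η => k' s η :=
  hk.cont'.comp (continuous_const.prodMk continuous_id)

theorem abs_sub_le_of_uIcc {t s η : ℝ} (h : η ∈ Set.uIcc t s) : |η - t| ≤ |s - t| := by
  rcases le_total t s with hts | hts
  · rw [Set.uIcc_of_le hts] at h
    rw [abs_of_nonneg (by linarith [h.1]), abs_of_nonneg (by linarith)]
    linarith [h.2]
  · rw [Set.uIcc_of_ge hts] at h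
    rw [abs_of_nonpos (by linarith [h.2]), abs_of_nonpos (by linarith)]
    linarith [h.1]

/-- The moving-endpoint part of the Leibniz rule. -/
theorem hasDerivAt_T1 {k k' : ℝ → ℝ → ℝ} (hk : NiceKer k k') (t : ℝ) :
    HasDerivAt (fun s => ∫ η in t..s, k s η) (k t t) t := by
  rw [hasDerivAt_iff_isLittleO]
  rw [Asymptotics.isLittleO_iff]
  intro c hc
  have hcont : ContinuousAt (fun p : ℝ × ℝ => k p.1 p.2) (t, t) := hk.cont.continuousAt
  rcases Metric.continuousAt_iff.1 hcont c hc with ⟨δ, hδ, hball⟩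
  filter_upwards [Metric.ball_mem_nhds t hδ] with s hs
  have key : ∀ η ∈ Set.uIcc t s, ‖k s η - k t t‖ ≤ c := by
    intro η hη
    have h1 : |η - t| ≤ |s - t| := abs_sub_le_of_uIcc hη
    have h2 : dist (s, η) (t, t) < δ := by
      rw [Prod.dist_eq]
      simp only [Real.dist_eq]
      exact max_lt (by simpa [Real.dist_eq] using hs) (lt_of_le_of_lt h1 (by simpa [Real.dist_eq] using hs))
    exact le_of_lt (hball h2)
  have heq : (∫ η in t..s, k s η) - (∫ η in t..t, k t η) - (s - t) • k t t
      = ∫ η in t..s, (k s η - k t t) := by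
    rw [intervalIntegral.integral_sub ((hk.cont_right s).intervalIntegrable t s)
      (intervalIntegrable_const), intervalIntegral.integral_const]
    simp
  rw [heq]
  calc ‖∫ η in t..s, (k s η - k t t)‖ ≤ c * |s - t| :=
        intervalIntegral.norm_integral_le_of_norm_le_const
          (fun η hη => key η (Set.uIoc_subset_uIcc hη))
    _ = c * ‖s - t‖ := by rw [Real.norm_eq_abs]

/-- Differentiation under the integral for fixed limits. -/
theorem hasDerivAt_T2 {k k' : ℝ → ℝ → ℝ} (hk : NiceKer k k') (a t : ℝ) :
    HasDerivAt (fun s => ∫ η in a..t, k s η) (∫ η in a..t, k' t η) t := by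
  obtain ⟨M, hM⟩ : ∃ M, ∀ p ∈ (Set.Icc (t-1) (t+1) ×ˢ Set.uIcc a t),
      ‖(fun p : ℝ × ℝ => k' p.1 p.2) p‖ ≤ M :=
    (IsCompact.exists_bound_of_continuousOn (isCompact_Icc.prod isCompact_uIcc)
      hk.cont'.continuousOn)
  refine (intervalIntegral.hasDerivAt_integral_of_dominated_loc_of_deriv_le
    (F := fun s η => k s η) (F' := fun s η => k' s η) (bound := fun _ => M)
    (Metric.ball_mem_nhds t one_pos)
    (Filter.Eventually.of_forall fun s => ((hk.cont_right s)).aestronglyMeasurable)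
    (((hk.cont_right t)).intervalIntegrable a t)
    (((hk.cont'_right t)).aestronglyMeasurable)
    (Filter.Eventually.of_forall fun η hη s hsb => ?_)
    (intervalIntegrable_const)
    (Filter.Eventually.of_forall fun η _ s _ => hk.hder s η)).2
  refine hM (s, η) ⟨?_, Set.uIoc_subset_uIcc hη⟩
  have := Metric.mem_ball.1 hsb
  rw [Real.dist_eq] at this
  constructor <;> [linarith [abs_le.1 (le_of_lt this)] ; linarith [(abs_le.1 (le_of_lt this)).2]]

/-- Leibniz rule for `t ↦ ∫_a^t k(t,η) dη`. -/
theorem NiceKer.hasDerivAt_int {k k' : ℝ → ℝ → ℝ} (hk : NiceKer k k') (a t : ℝ) :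
    HasDerivAt (fun s => ∫ η in a..s, k s η) (k t t + ∫ η in a..t, k' t η) t := by
  have hsplit : (fun s => ∫ η in a..s, k s η)
      = fun s => (∫ η in t..s, k s η) + ∫ η in a..t, k s η := by
    funext s
    rw [← intervalIntegral.integral_add_adjacent_intervals
      (((hk.cont_right s)).intervalIntegrable a t) (((hk.cont_right s)).intervalIntegrable t s)]
    ring
  rw [hsplit]
  exact (hasDerivAt_T1 hk t).add (hasDerivAt_T2 hk a t)
/-! ### The step lemma -/

noncomputable def sker (k k' : ℝ → ℝ → ℝ) (t η : ℝ) : ℝ := k t t + ∫ ξ in η..t, k' t ξ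

theorem hasDerivAt_W {k k' : ℝ → ℝ → ℝ} (hk : NiceKer k k') (t η : ℝ) :
    HasDerivAt (fun y => ∫ ξ in y..t, k' t ξ) (-(k' t η)) η := by
  have h1 : (fun y => ∫ ξ in y..t, k' t ξ) = fun y => -(∫ ξ in t..y, k' t ξ) := by
    funext y; rw [← intervalIntegral.integral_symm]
  rw [h1]
  exact (intervalIntegral.integral_hasDerivAt_right
    (((hk.cont'_right t)).intervalIntegrable t η)
    ((hk.cont'_right t).stronglyMeasurableAtFilter _ _)
    (hk.cont'_right t).continuousAt).neg

theorem continuous_W {k k' : ℝ → ℝ → ℝ} (hk : NiceKer k k') (t : ℝ) :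
    Continuous (fun y => ∫ ξ in y..t, k' t ξ) :=
  continuous_iff_continuousAt.2 fun η => ((hasDerivAt_W hk t η)).continuousAt

theorem stepS {k k' : ℝ → ℝ → ℝ} (hk : NiceKer k k') {v v' : ℝ → ℝ}
    (hv : ∀ s, HasDerivAt v (v' s) s) (hv' : Continuous v') (hv0 : v 0 = 0) (t : ℝ) :
    HasDerivAt (fun s => ∫ η in (0:ℝ)..s, k s η * v η)
      (∫ η in (0:ℝ)..t, sker k k' t η * v' η) t := by
  have hvc : Continuous v := continuous_iff_continuousAt.2 fun s => (hv s).continuousAt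
  have hK : NiceKer (fun s η => k s η * v η) (fun s η => k' s η * v η) :=
    ⟨hk.cont.mul (hvc.comp continuous_snd), fun t η => (hk.hder t η).mul_const (v η),
      hk.cont'.mul (hvc.comp continuous_snd)⟩
  have hL := hK.hasDerivAt_int 0 t
  have heq : (∫ η in (0:ℝ)..t, sker k k' t η * v' η)
      = k t t * v t + ∫ η in (0:ℝ)..t, k' t η * v η := by
    have hsker : ∀ η, sker k k' t η * v' η
        = k t t * v' η + (∫ ξ in η..t, k' t ξ) * v' η := by
      intro η; rw [sker]; ring
    rw [intervalIntegral.integral_congr (g := fun η =>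
      k t t * v' η + (∫ ξ in η..t, k' t ξ) * v' η) (fun η _ => hsker η)]
    rw [intervalIntegral.integral_add (f := fun η => k t t * v' η)
      (g := fun η => (∫ ξ in η..t, k' t ξ) * v' η)
      ((continuous_const.mul hv').intervalIntegrable 0 t)
      (((continuous_W hk t).mul hv').intervalIntegrable 0 t)]
    have hFTC : (∫ η in (0:ℝ)..t, v' η) = v t - v 0 :=
      intervalIntegral.integral_eq_sub_of_hasDerivAt (fun s _ => hv s)
        (hv'.intervalIntegrable 0 t)
    have h1 : (∫ η in (0:ℝ)..t, k t t * v' η) = k t t * v t := by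
      rw [intervalIntegral.integral_const_mul, hFTC, hv0]; ring
    have h2 : (∫ η in (0:ℝ)..t, (∫ ξ in η..t, k' t ξ) * v' η)
        = ∫ η in (0:ℝ)..t, k' t η * v η := by
      rw [intervalIntegral.integral_mul_deriv_eq_deriv_mul
        (u := fun y => ∫ ξ in y..t, k' t ξ) (u' := fun y => -(k' t y))
        (fun y _ => hasDerivAt_W hk t y) (fun y _ => hv y)
        (((hk.cont'_right t).neg).intervalIntegrable 0 t)
        (hv'.intervalIntegrable 0 t)]
      rw [intervalIntegral.integral_same, hv0]
      have : (∫ η in (0:ℝ)..t, -(k' t η) * v η) = -∫ η in (0:ℝ)..t, k' t η * v η := by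
        rw [← intervalIntegral.integral_neg]; congr 1; funext η; ring
      rw [this]; ring
    rw [h1, h2]
  rw [heq]
  exact hL
/-! ### Iterated kernels -/

theorem lslice_eq (f : ℝ × ℝ → ℝ) (η : ℝ) :
    (fun s : ℝ => f (s, η)) = fun s : ℝ => f ((0, η) + s • ((1:ℝ), (0:ℝ))) := by
  funext s; congr 1; simp [Prod.ext_iff]

theorem hasDerivAt_lslice {f : ℝ × ℝ → ℝ} (hf : Differentiable ℝ f) (t η : ℝ) :
    HasDerivAt (fun s => f (s, η)) (dV ((1:ℝ),(0:ℝ)) f (t, η)) t := by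
  have h := hasDerivAt_line hf ((0:ℝ), η) ((1:ℝ),(0:ℝ)) t
  have e : ((0:ℝ), η) + t • ((1:ℝ),(0:ℝ)) = (t, η) := by simp [Prod.ext_iff]
  rw [e] at h
  rw [lslice_eq f η]
  exact h

theorem hasDerivAt_dslice {f : ℝ × ℝ → ℝ} (hf : Differentiable ℝ f) (t : ℝ) :
    HasDerivAt (fun s => f (s, s)) (dV ((1:ℝ),(1:ℝ)) f (t, t)) t := by
  have h := hasDerivAt_line hf ((0:ℝ), (0:ℝ)) ((1:ℝ),(1:ℝ)) t
  have e : ((0:ℝ), (0:ℝ)) + t • ((1:ℝ),(1:ℝ)) = (t, t) := by simp [Prod.ext_iff]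
  rw [e] at h
  have e2 : (fun s : ℝ => f (s, s)) = fun s : ℝ => f ((0, 0) + s • ((1:ℝ), (1:ℝ))) := by
    funext s; congr 1; simp [Prod.ext_iff]
  rw [e2]
  exact h

theorem niceKer_ks {K : ℝ × ℝ → ℝ} (hK : ContDiff ℝ (⊤:ℕ∞) K) :
    NiceKer (fun t η => K (t,η)) (fun t η => dV ((1:ℝ),(0:ℝ)) K (t,η)) :=
  ⟨hK.continuous, fun t η => hasDerivAt_lslice hK.diffble t η, (hK.dV' _).continuous⟩

theorem cont_intKer {H : ℝ × ℝ → ℝ} (hH : Continuous H) :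
    Continuous fun p : ℝ × ℝ => ∫ ξ in p.2..p.1, H (p.1, ξ) := by
  have h1 : Continuous fun p : ℝ × ℝ => ∫ ξ in (0:ℝ)..p.1, H (p.1, ξ) :=
    intervalIntegral.continuous_parametric_intervalIntegral_of_continuous
      (f := fun (p : ℝ × ℝ) ξ => H (p.1, ξ))
      (by exact hH.comp (continuous_fst.fst.prodMk continuous_snd)) continuous_fst
  have h2 : Continuous fun p : ℝ × ℝ => ∫ ξ in (0:ℝ)..p.2, H (p.1, ξ) :=
    intervalIntegral.continuous_parametric_intervalIntegral_of_continuous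
      (f := fun (p : ℝ × ℝ) ξ => H (p.1, ξ))
      (by exact hH.comp (continuous_fst.fst.prodMk continuous_snd)) continuous_snd
  have he : (fun p : ℝ × ℝ => ∫ ξ in p.2..p.1, H (p.1, ξ))
      = fun p : ℝ × ℝ => (∫ ξ in (0:ℝ)..p.1, H (p.1, ξ)) - ∫ ξ in (0:ℝ)..p.2, H (p.1, ξ) := by
    funext p
    have hci : Continuous fun ξ => H (p.1, ξ) :=
      hH.comp (continuous_const.prodMk continuous_id)
    have := intervalIntegral.integral_add_adjacent_intervals
      (a := (0:ℝ)) (b := p.2) (c := p.1) (f := fun ξ => H (p.1, ξ)) (μ := MeasureTheory.volume)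
      (hci.intervalIntegrable 0 p.2) (hci.intervalIntegrable p.2 p.1)
    linarith
  rw [he]
  exact h1.sub h2

theorem niceKer_sker {K : ℝ × ℝ → ℝ} (hK : ContDiff ℝ (⊤:ℕ∞) K) :
    NiceKer (sker (fun t η => K (t,η)) (fun t η => dV ((1:ℝ),(0:ℝ)) K (t,η)))
      (fun t η => dV ((1:ℝ),(1:ℝ)) K (t,t) + (dV ((1:ℝ),(0:ℝ)) K (t,t)
        + ∫ ξ in η..t, dV ((1:ℝ),(0:ℝ)) (dV ((1:ℝ),(0:ℝ)) K) (t,ξ))) := by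
  constructor
  · have h1 : Continuous fun p : ℝ × ℝ => K (p.1, p.1) :=
      hK.continuous.comp (continuous_fst.prodMk continuous_fst)
    have h2 := cont_intKer (hK.dV' ((1:ℝ),(0:ℝ))).continuous
    exact h1.add h2
  · intro t η
    have hd : HasDerivAt (fun s => K (s, s)) (dV ((1:ℝ),(1:ℝ)) K (t,t)) t :=
      hasDerivAt_dslice hK.diffble t
    have hi := (niceKer_ks (hK.dV' ((1:ℝ),(0:ℝ)))).hasDerivAt_int η t
    exact hd.add hi
  · have h1 : Continuous fun p : ℝ × ℝ => dV ((1:ℝ),(1:ℝ)) K (p.1, p.1) :=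
      (hK.dV' _).continuous.comp (continuous_fst.prodMk continuous_fst)
    have h2 : Continuous fun p : ℝ × ℝ => dV ((1:ℝ),(0:ℝ)) K (p.1, p.1) :=
      (hK.dV' _).continuous.comp (continuous_fst.prodMk continuous_fst)
    have h3 := cont_intKer ((hK.dV' ((1:ℝ),(0:ℝ))).dV' ((1:ℝ),(0:ℝ))).continuous
    exact h1.add (h2.add h3)

theorem ker1_eq {n : ℕ} (b : (Fin n → ℝ) → ℝ → ℝ → ℝ)
    (hb : ContDiff ℝ (⊤:ℕ∞) (fun p : (Fin n → ℝ) × ℝ × ℝ => b p.1 p.2.1 p.2.2))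
    (x : Fin n → ℝ) :
    ker1 b x = sker (fun t η => b x t η)
      (fun t η => dV ((1:ℝ),(0:ℝ)) (fun q : ℝ × ℝ => b x q.1 q.2) (t,η)) := by
  have hK : ContDiff ℝ (⊤:ℕ∞) (fun q : ℝ × ℝ => b x q.1 q.2) :=
    hb.comp (contDiff_const.prodMk contDiff_id)
  funext t η
  rw [ker1, sker]
  congr 1
  apply intervalIntegral.integral_congr
  intro ξ _
  exact (hasDerivAt_lslice hK.diffble t ξ).deriv

theorem ker2_eq {n : ℕ} (b : (Fin n → ℝ) → ℝ → ℝ → ℝ)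
    (hb : ContDiff ℝ (⊤:ℕ∞) (fun p : (Fin n → ℝ) × ℝ × ℝ => b p.1 p.2.1 p.2.2))
    (x : Fin n → ℝ) :
    ker1 (ker1 b) x
      = sker (sker (fun t η => b x t η)
          (fun t η => dV ((1:ℝ),(0:ℝ)) (fun q : ℝ × ℝ => b x q.1 q.2) (t,η)))
        (fun t η => dV ((1:ℝ),(1:ℝ)) (fun q : ℝ × ℝ => b x q.1 q.2) (t,t)
          + (dV ((1:ℝ),(0:ℝ)) (fun q : ℝ × ℝ => b x q.1 q.2) (t,t)
          + ∫ ξ in η..t, dV ((1:ℝ),(0:ℝ)) (dV ((1:ℝ),(0:ℝ))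
              (fun q : ℝ × ℝ => b x q.1 q.2)) (t,ξ))) := by
  have hK : ContDiff ℝ (⊤:ℕ∞) (fun q : ℝ × ℝ => b x q.1 q.2) :=
    hb.comp (contDiff_const.prodMk contDiff_id)
  funext t η
  rw [ker1, sker]
  congr 1
  · rw [ker1_eq b hb x]
  · apply intervalIntegral.integral_congr
    intro ξ _
    show deriv (fun s => ker1 b x s ξ) t = _
    have h1 : (fun s => ker1 b x s ξ) = fun s => sker (fun t η => b x t η)
        (fun t η => dV ((1:ℝ),(0:ℝ)) (fun q : ℝ × ℝ => b x q.1 q.2) (t,η)) s ξ := by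
      rw [ker1_eq b hb x]
    rw [h1]
    exact ((niceKer_sker hK).hder t ξ).deriv
/-! ### Time derivative of the elliptic term -/

theorem pd_mul_eq {n : ℕ} {a : (Fin n → ℝ) → ℝ} (ha : Differentiable ℝ a)
    {h : (Fin n → ℝ) × ℝ → ℝ} (hh : Differentiable ℝ h) (i : Fin n)
    (x : Fin n → ℝ) (t : ℝ) :
    pd i (fun y => a y * h (y,t)) x
      = a x * dV ((Pi.single i 1 : Fin n → ℝ), (0:ℝ)) h (x,t)
        + h (x,t) * fderiv ℝ a x (Pi.single i 1) := by
  have hsl : HasFDerivAt (fun y => h (y,t))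
      ((fderiv ℝ h (x, t)).comp (ContinuousLinearMap.inl ℝ _ ℝ)) x :=
    (hh (x,t)).hasFDerivAt.comp x (hasFDerivAt_prodMk_left x t)
  have hmul := (ha x).hasFDerivAt.mul hsl
  rw [pd, show (fun y => a y * h (y, t)) = (a * fun y => h (y, t)) from rfl, hmul.fderiv]
  simp [dV, mul_comm]

theorem hasDerivAt_pd_mul {n : ℕ} {a : (Fin n → ℝ) → ℝ} (ha : Differentiable ℝ a)
    {h : (Fin n → ℝ) × ℝ → ℝ} (hh : ContDiff ℝ (⊤:ℕ∞) h) (i : Fin n)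
    (x : Fin n → ℝ) (t : ℝ) :
    HasDerivAt (fun s => pd i (fun y => a y * h (y,s)) x)
      (pd i (fun y => a y * dV ((0:Fin n → ℝ),(1:ℝ)) h (y,t)) x) t := by
  set ei : (Fin n → ℝ) × ℝ := ((Pi.single i 1 : Fin n → ℝ), (0:ℝ)) with hei
  set et : (Fin n → ℝ) × ℝ := ((0:Fin n → ℝ), (1:ℝ)) with het
  have hfun : (fun s => pd i (fun y => a y * h (y,s)) x)
      = fun s => a x * dV ei h (x,s) + h (x,s) * fderiv ℝ a x (Pi.single i 1) :=
    funext fun s => pd_mul_eq ha hh.diffble i x s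
  have h1 : HasDerivAt (fun s => a x * dV ei h (x,s))
      (a x * dV et (dV ei h) (x,t)) t :=
    (hasDerivAt_slice (hh.dV' ei).diffble x t).const_mul (a x)
  have h2 : HasDerivAt (fun s => h (x,s) * fderiv ℝ a x (Pi.single i 1))
      (dV et h (x,t) * fderiv ℝ a x (Pi.single i 1)) t :=
    (hasDerivAt_slice hh.diffble x t).mul_const _
  have hval : pd i (fun y => a y * dV et h (y,t)) x
      = a x * dV et (dV ei h) (x,t) + dV et h (x,t) * fderiv ℝ a x (Pi.single i 1) := by
    rw [pd_mul_eq ha (hh.dV' et).diffble i x t, dV_swap hh et ei (x,t)]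
  rw [hfun, hval]
  exact h1.add h2

theorem opA_slice_eq {n : ℕ} (aij : Fin n → Fin n → (Fin n → ℝ) → ℝ)
    {U : (Fin n → ℝ) × ℝ → ℝ} (hU : Differentiable ℝ U)
    (x : Fin n → ℝ) (t : ℝ) :
    opA aij (fun y => U (y,t)) x
      = ∑ i, ∑ j, pd i (fun y => aij i j y
          * dV ((Pi.single j 1 : Fin n → ℝ), (0:ℝ)) U (y,t)) x := by
  rw [opA]
  refine Finset.sum_congr rfl fun i _ => Finset.sum_congr rfl fun j _ => ?_
  congr 1
  funext y
  rw [pd_slice (hU (y,t)) j]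

theorem hasDerivAt_opA {n : ℕ} (aij : Fin n → Fin n → (Fin n → ℝ) → ℝ)
    (ha : ∀ i j, Differentiable ℝ (aij i j))
    {U : (Fin n → ℝ) × ℝ → ℝ} (hU : ContDiff ℝ (⊤:ℕ∞) U)
    (x : Fin n → ℝ) (t : ℝ) :
    HasDerivAt (fun s => opA aij (fun y => U (y,s)) x)
      (opA aij (fun y => dV ((0:Fin n → ℝ),(1:ℝ)) U (y,t)) x) t := by
  set et : (Fin n → ℝ) × ℝ := ((0:Fin n → ℝ), (1:ℝ)) with het
  have hfun : (fun s => opA aij (fun y => U (y,s)) x)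
      = fun s => ∑ i, ∑ j, pd i (fun y => aij i j y
          * dV ((Pi.single j 1 : Fin n → ℝ), (0:ℝ)) U (y,s)) x :=
    funext fun s => opA_slice_eq aij hU.diffble x s
  have hval : opA aij (fun y => dV et U (y,t)) x
      = ∑ i, ∑ j, pd i (fun y => aij i j y
          * dV et (dV ((Pi.single j 1 : Fin n → ℝ), (0:ℝ)) U) (y,t)) x := by
    rw [opA_slice_eq aij (hU.dV' et).diffble x t]
    refine Finset.sum_congr rfl fun i _ => Finset.sum_congr rfl fun j _ => ?_
    congr 1
    funext y
    rw [dV_swap hU et ((Pi.single j 1 : Fin n → ℝ), (0:ℝ)) (y,t)]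
  rw [hfun, hval]
  refine HasDerivAt.fun_sum fun i _ => HasDerivAt.fun_sum fun j _ => ?_
  exact hasDerivAt_pd_mul (ha i j) (hU.dV' _) i x t
/-! ### Derivative of the memory term -/

theorem split3 {n : ℕ} (c0 : ℝ → ℝ) (c1 : Fin n → ℝ → ℝ) (c2 : Fin n → Fin n → ℝ → ℝ)
    (h0 : Continuous c0) (h1 : ∀ i, Continuous (c1 i)) (h2 : ∀ i j, Continuous (c2 i j))
    (s : ℝ) :
    (∫ η in (0:ℝ)..s, (c0 η + (∑ i, c1 i η) + ∑ i, ∑ j, c2 i j η))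
      = (∫ η in (0:ℝ)..s, c0 η) + (∑ i, ∫ η in (0:ℝ)..s, c1 i η)
        + ∑ i, ∑ j, ∫ η in (0:ℝ)..s, c2 i j η := by
  have hc1s : Continuous fun η => ∑ i, c1 i η := continuous_finset_sum _ fun i _ => h1 i
  have hc2in : ∀ i, Continuous fun η => ∑ j, c2 i j η :=
    fun i => continuous_finset_sum _ fun j _ => h2 i j
  have hc2s : Continuous fun η => ∑ i, ∑ j, c2 i j η :=
    continuous_finset_sum _ fun i _ => hc2in i
  rw [intervalIntegral.integral_add (f := fun η => c0 η + ∑ i, c1 i η)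
    (g := fun η => ∑ i, ∑ j, c2 i j η) ((h0.add hc1s).intervalIntegrable 0 s)
    (hc2s.intervalIntegrable 0 s), intervalIntegral.integral_add (f := c0)
    (g := fun η => ∑ i, c1 i η) (h0.intervalIntegrable 0 s)
    (hc1s.intervalIntegrable 0 s)]
  congr 1
  · congr 1
    rw [intervalIntegral.integral_finset_sum (fun i _ => (h1 i).intervalIntegrable 0 s)]
  · rw [intervalIntegral.integral_finset_sum (fun i _ => (hc2in i).intervalIntegrable 0 s)]
    refine Finset.sum_congr rfl fun i _ => ?_
    rw [intervalIntegral.integral_finset_sum (fun j _ => (h2 i j).intervalIntegrable 0 s)]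

theorem memStep {n : ℕ}
    {k0 k0' : ℝ → ℝ → ℝ} (hk0 : NiceKer k0 k0')
    {K1 K1' : Fin n → ℝ → ℝ → ℝ} (hK1 : ∀ i, NiceKer (K1 i) (K1' i))
    {K2 K2' : Fin n → Fin n → ℝ → ℝ → ℝ} (hK2 : ∀ i j, NiceKer (K2 i j) (K2' i j))
    {g0 g0' : ℝ → ℝ} (hg0 : ∀ s, HasDerivAt g0 (g0' s) s)
    (hg0c : Continuous g0') (hg00 : g0 0 = 0)
    {g1 g1' : Fin n → ℝ → ℝ} (hg1 : ∀ i s, HasDerivAt (g1 i) (g1' i s) s)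
    (hg1c : ∀ i, Continuous (g1' i)) (hg10 : ∀ i, g1 i 0 = 0)
    {g2 g2' : Fin n → Fin n → ℝ → ℝ} (hg2 : ∀ i j s, HasDerivAt (g2 i j) (g2' i j s) s)
    (hg2c : ∀ i j, Continuous (g2' i j)) (hg20 : ∀ i j, g2 i j 0 = 0)
    (t : ℝ) :
    HasDerivAt (fun s => ∫ η in (0:ℝ)..s,
        (k0 s η * g0 η + (∑ i, K1 i s η * g1 i η) + ∑ i, ∑ j, K2 i j s η * g2 i j η))
      (∫ η in (0:ℝ)..t,
        (sker k0 k0' t η * g0' η + (∑ i, sker (K1 i) (K1' i) t η * g1' i η)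
          + ∑ i, ∑ j, sker (K2 i j) (K2' i j) t η * g2' i j η)) t := by
  have hg0cont : Continuous g0 := continuous_iff_continuousAt.2 fun s => (hg0 s).continuousAt
  have hg1cont : ∀ i, Continuous (g1 i) :=
    fun i => continuous_iff_continuousAt.2 fun s => (hg1 i s).continuousAt
  have hg2cont : ∀ i j, Continuous (g2 i j) :=
    fun i j => continuous_iff_continuousAt.2 fun s => (hg2 i j s).continuousAt
  have hskerc : ∀ (k k' : ℝ → ℝ → ℝ), NiceKer k k' → ∀ s, Continuous fun η => sker k k' s η :=
    fun k k' hk s => continuous_const.add (continuous_W hk s)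
  have hfun : (fun s => ∫ η in (0:ℝ)..s,
        (k0 s η * g0 η + (∑ i, K1 i s η * g1 i η) + ∑ i, ∑ j, K2 i j s η * g2 i j η))
      = fun s => (∫ η in (0:ℝ)..s, k0 s η * g0 η)
          + (∑ i, ∫ η in (0:ℝ)..s, K1 i s η * g1 i η)
          + ∑ i, ∑ j, ∫ η in (0:ℝ)..s, K2 i j s η * g2 i j η :=
    funext fun s => split3 _ _ _ ((hk0.cont_right s).mul hg0cont)
      (fun i => ((hK1 i).cont_right s).mul (hg1cont i))
      (fun i j => ((hK2 i j).cont_right s).mul (hg2cont i j)) s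
  have hval : (∫ η in (0:ℝ)..t,
        (sker k0 k0' t η * g0' η + (∑ i, sker (K1 i) (K1' i) t η * g1' i η)
          + ∑ i, ∑ j, sker (K2 i j) (K2' i j) t η * g2' i j η))
      = (∫ η in (0:ℝ)..t, sker k0 k0' t η * g0' η)
          + (∑ i, ∫ η in (0:ℝ)..t, sker (K1 i) (K1' i) t η * g1' i η)
          + ∑ i, ∑ j, ∫ η in (0:ℝ)..t, sker (K2 i j) (K2' i j) t η * g2' i j η :=
    split3 _ _ _ ((hskerc _ _ hk0 t).mul hg0c)
      (fun i => (hskerc _ _ (hK1 i) t).mul (hg1c i))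
      (fun i j => (hskerc _ _ (hK2 i j) t).mul (hg2c i j)) t
  rw [hfun, hval]
  refine HasDerivAt.add (HasDerivAt.add ?_ ?_) ?_
  · exact stepS hk0 hg0 hg0c hg00 t
  · exact HasDerivAt.fun_sum fun i _ => stepS (hK1 i) (hg1 i) (hg1c i) (hg10 i) t
  · exact HasDerivAt.fun_sum fun i _ => HasDerivAt.fun_sum fun j _ =>
      stepS (hK2 i j) (hg2 i j) (hg2c i j) (hg20 i j) t
/-! ### Specialization to the PDE data -/

abbrev etv (n : ℕ) : (Fin n → ℝ) × ℝ := (0, 1)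
abbrev eiv {n : ℕ} (i : Fin n) : (Fin n → ℝ) × ℝ := (Pi.single i 1, 0)
abbrev unc {n : ℕ} (u : (Fin n → ℝ) → ℝ → ℝ) : (Fin n → ℝ) × ℝ → ℝ := fun p => u p.1 p.2

noncomputable def skb {n : ℕ} (b : (Fin n → ℝ) → ℝ → ℝ → ℝ) (x : Fin n → ℝ) : ℝ → ℝ → ℝ :=
  sker (fun t η => b x t η)
    (fun t η => dV ((1:ℝ),(0:ℝ)) (fun q : ℝ × ℝ => b x q.1 q.2) (t,η))

noncomputable def skb' {n : ℕ} (b : (Fin n → ℝ) → ℝ → ℝ → ℝ) (x : Fin n → ℝ) : ℝ → ℝ → ℝ :=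
  fun t η => dV ((1:ℝ),(1:ℝ)) (fun q : ℝ × ℝ => b x q.1 q.2) (t,t)
    + (dV ((1:ℝ),(0:ℝ)) (fun q : ℝ × ℝ => b x q.1 q.2) (t,t)
      + ∫ ξ in η..t, dV ((1:ℝ),(0:ℝ)) (dV ((1:ℝ),(0:ℝ))
          (fun q : ℝ × ℝ => b x q.1 q.2)) (t,ξ))

theorem smoothK {n : ℕ} {b : (Fin n → ℝ) → ℝ → ℝ → ℝ} (hb : SmoothBdd3 b) (x : Fin n → ℝ) :
    ContDiff ℝ (⊤:ℕ∞) (fun q : ℝ × ℝ => b x q.1 q.2) :=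
  hb.1.comp (contDiff_const.prodMk contDiff_id)

theorem niceKer_slice {n : ℕ} {b : (Fin n → ℝ) → ℝ → ℝ → ℝ} (hb : SmoothBdd3 b)
    (x : Fin n → ℝ) :
    NiceKer (fun t η => b x t η)
      (fun t η => dV ((1:ℝ),(0:ℝ)) (fun q : ℝ × ℝ => b x q.1 q.2) (t,η)) :=
  niceKer_ks (smoothK hb x)

theorem niceKer_skb {n : ℕ} {b : (Fin n → ℝ) → ℝ → ℝ → ℝ} (hb : SmoothBdd3 b)
    (x : Fin n → ℝ) : NiceKer (skb b x) (skb' b x) :=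
  niceKer_sker (smoothK hb x)

theorem ker1_skb {n : ℕ} {b : (Fin n → ℝ) → ℝ → ℝ → ℝ} (hb : SmoothBdd3 b) (x : Fin n → ℝ) :
    ker1 b x = skb b x :=
  ker1_eq b hb.1 x

theorem ker2_skb {n : ℕ} {b : (Fin n → ℝ) → ℝ → ℝ → ℝ} (hb : SmoothBdd3 b) (x : Fin n → ℝ) :
    ker1 (ker1 b) x = sker (skb b x) (skb' b x) :=
  ker2_eq b hb.1 x

theorem pd_const0 {n : ℕ} (i : Fin n) (x : Fin n → ℝ) :
    pd i (fun _ : Fin n → ℝ => (0:ℝ)) x = 0 := by simp [pd]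

theorem opA_zero {n : ℕ} (a : Fin n → Fin n → (Fin n → ℝ) → ℝ) (x : Fin n → ℝ) :
    opA a (fun _ => (0:ℝ)) x = 0 := by
  rw [opA]
  refine Finset.sum_eq_zero fun i _ => Finset.sum_eq_zero fun j _ => ?_
  have h1 : (fun y => a i j y * pd j (fun _ : Fin n → ℝ => (0:ℝ)) y) = fun _ => (0:ℝ) := by
    funext y; rw [pd_const0]; ring
  rw [h1, pd_const0]

theorem dV_vanish {n : ℕ} {G : (Fin n → ℝ) × ℝ → ℝ} (hG : ContDiff ℝ (⊤:ℕ∞) G)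
    (h0 : ∀ y, G (y, 0) = 0) (i : Fin n) (y : Fin n → ℝ) : dV (eiv i) G (y, 0) = 0 := by
  rw [show eiv i = ((Pi.single i 1 : Fin n → ℝ), (0:ℝ)) from rfl,
    ← pd_slice (hG.diffble (y, 0)) i,
    show (fun y' => G (y', 0)) = fun _ : Fin n → ℝ => (0:ℝ) from funext h0, pd_const0]

theorem dV_comm_fn {E : Type*} [NormedAddCommGroup E] [NormedSpace ℝ E]
    {f : E → ℝ} (hf : ContDiff ℝ (⊤:ℕ∞) f) (v w : E) : dV w (dV v f) = dV v (dV w f) :=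
  funext fun p => dV_swap hf v w p

theorem eq_at_zero {T : ℝ} (hT : 0 < T) {φ ψ : ℝ → ℝ} (hφ : ContinuousAt φ 0)
    (hψ : ContinuousAt ψ 0) (h : ∀ t ∈ Set.Ioo (0:ℝ) T, φ t = ψ t) : φ 0 = ψ 0 := by
  have hne : (nhdsWithin (0:ℝ) (Set.Ioo (0:ℝ) T)).NeBot := by
    rw [← mem_closure_iff_nhdsWithin_neBot, closure_Ioo hT.ne]
    exact ⟨le_refl 0, hT.le⟩
  have h1 : Filter.Tendsto φ (nhdsWithin (0:ℝ) (Set.Ioo (0:ℝ) T)) (nhds (φ 0)) :=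
    hφ.continuousWithinAt
  have h2 : Filter.Tendsto ψ (nhdsWithin (0:ℝ) (Set.Ioo (0:ℝ) T)) (nhds (ψ 0)) :=
    hψ.continuousWithinAt
  have h3 : Filter.Tendsto φ (nhdsWithin (0:ℝ) (Set.Ioo (0:ℝ) T)) (nhds (ψ 0)) := by
    refine Filter.Tendsto.congr' ?_ h2
    filter_upwards [self_mem_nhdsWithin] with t ht using (h t ht).symm
  exact tendsto_nhds_unique h1 h3

theorem deriv_eq_on_Ioo {T : ℝ} {φ ψ : ℝ → ℝ} {a b t : ℝ} (ht : t ∈ Set.Ioo (0:ℝ) T)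
    (h : ∀ s ∈ Set.Ioo (0:ℝ) T, φ s = ψ s)
    (hφ : HasDerivAt φ a t) (hψ : HasDerivAt ψ b t) : a = b := by
  have hev : φ =ᶠ[nhds t] ψ := by
    filter_upwards [isOpen_Ioo.mem_nhds ht] with s hs using h s hs
  exact ((hψ.congr_of_eventuallyEq hev).unique hφ).symm
/-! ### The two differentiation steps for the memory term -/

theorem memD1 {n : ℕ} {b0 : (Fin n → ℝ) → ℝ → ℝ → ℝ}
    {b1 : Fin n → (Fin n → ℝ) → ℝ → ℝ → ℝ} {b2 : Fin n → Fin n → (Fin n → ℝ) → ℝ → ℝ → ℝ}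
    (hb0 : SmoothBdd3 b0) (hb1 : ∀ i, SmoothBdd3 (b1 i)) (hb2 : ∀ i j, SmoothBdd3 (b2 i j))
    {u : (Fin n → ℝ) → ℝ → ℝ} (hu : ContDiff ℝ (⊤:ℕ∞) (unc u))
    (hz0 : ∀ y, unc u (y, 0) = 0) (x : Fin n → ℝ) (t : ℝ) :
    HasDerivAt (fun s => memTerm b0 b1 b2 u x s)
      (∫ η in (0:ℝ)..t, (skb b0 x t η * dV (etv n) (unc u) (x,η)
        + (∑ i, skb (b1 i) x t η * dV (etv n) (dV (eiv i) (unc u)) (x,η))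
        + ∑ i, ∑ j, skb (b2 i j) x t η
            * dV (etv n) (dV (eiv i) (dV (eiv j) (unc u))) (x,η))) t := by
  have key := memStep (n := n)
    (hk0 := niceKer_slice hb0 x) (hK1 := fun i => niceKer_slice (hb1 i) x)
    (hK2 := fun i j => niceKer_slice (hb2 i j) x)
    (g0 := fun η => unc u (x,η)) (g0' := fun η => dV (etv n) (unc u) (x,η))
    (hg0 := fun s => hasDerivAt_slice hu.diffble x s)
    (hg0c := (hu.dV' (etv n)).continuous.comp (continuous_const.prodMk continuous_id))
    (hg00 := hz0 x)
    (g1 := fun i η => dV (eiv i) (unc u) (x,η))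
    (g1' := fun i η => dV (etv n) (dV (eiv i) (unc u)) (x,η))
    (hg1 := fun i s => hasDerivAt_slice (hu.dV' (eiv i)).diffble x s)
    (hg1c := fun i => ((hu.dV' (eiv i)).dV' (etv n)).continuous.comp
      (continuous_const.prodMk continuous_id))
    (hg10 := fun i => dV_vanish hu hz0 i x)
    (g2 := fun i j η => dV (eiv i) (dV (eiv j) (unc u)) (x,η))
    (g2' := fun i j η => dV (etv n) (dV (eiv i) (dV (eiv j) (unc u))) (x,η))
    (hg2 := fun i j s => hasDerivAt_slice ((hu.dV' (eiv j)).dV' (eiv i)).diffble x s)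
    (hg2c := fun i j => (((hu.dV' (eiv j)).dV' (eiv i)).dV' (etv n)).continuous.comp
      (continuous_const.prodMk continuous_id))
    (hg20 := fun i j => dV_vanish (hu.dV' (eiv j))
      (fun y => dV_vanish hu hz0 j y) i x)
    t
  have hfn : (fun s => memTerm b0 b1 b2 u x s)
      = (fun s => ∫ η in (0:ℝ)..s, (b0 x s η * unc u (x,η)
        + (∑ i, b1 i x s η * dV (eiv i) (unc u) (x,η))
        + ∑ i, ∑ j, b2 i j x s η * dV (eiv i) (dV (eiv j) (unc u)) (x,η))) := by
    funext s
    simp only [memTerm]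
    apply intervalIntegral.integral_congr
    intro η _
    have e1 : ∀ i : Fin n, pd i (fun y => u y η) x = dV (eiv i) (unc u) (x,η) :=
      fun i => pd_slice (hu.diffble (x,η)) i
    have e2 : ∀ i j : Fin n, pd i (pd j (fun y => u y η)) x
        = dV (eiv i) (dV (eiv j) (unc u)) (x,η) := by
      intro i j
      have hj : pd j (fun y => u y η) = fun y => dV (eiv j) (unc u) (y,η) :=
        funext fun y => pd_slice (hu.diffble (y,η)) j
      rw [hj]
      exact pd_slice ((hu.dV' (eiv j)).diffble (x,η)) i
    simp only [e1, e2]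
  rw [hfn]
  exact key

theorem memD2 {n : ℕ} {b0 : (Fin n → ℝ) → ℝ → ℝ → ℝ}
    {b1 : Fin n → (Fin n → ℝ) → ℝ → ℝ → ℝ} {b2 : Fin n → Fin n → (Fin n → ℝ) → ℝ → ℝ → ℝ}
    (hb0 : SmoothBdd3 b0) (hb1 : ∀ i, SmoothBdd3 (b1 i)) (hb2 : ∀ i j, SmoothBdd3 (b2 i j))
    {u : (Fin n → ℝ) → ℝ → ℝ} (hu : ContDiff ℝ (⊤:ℕ∞) (unc u))
    (hz1 : ∀ y, dV (etv n) (unc u) (y, 0) = 0) (x : Fin n → ℝ) (t : ℝ) :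
    HasDerivAt (fun s => ∫ η in (0:ℝ)..s, (skb b0 x s η * dV (etv n) (unc u) (x,η)
        + (∑ i, skb (b1 i) x s η * dV (etv n) (dV (eiv i) (unc u)) (x,η))
        + ∑ i, ∑ j, skb (b2 i j) x s η
            * dV (etv n) (dV (eiv i) (dV (eiv j) (unc u))) (x,η)))
      (∫ η in (0:ℝ)..t, (sker (skb b0 x) (skb' b0 x) t η
            * dV (etv n) (dV (etv n) (unc u)) (x,η)
        + (∑ i, sker (skb (b1 i) x) (skb' (b1 i) x) t η
            * dV (etv n) (dV (etv n) (dV (eiv i) (unc u))) (x,η))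
        + ∑ i, ∑ j, sker (skb (b2 i j) x) (skb' (b2 i j) x) t η
            * dV (etv n) (dV (etv n) (dV (eiv i) (dV (eiv j) (unc u)))) (x,η))) t := by
  exact memStep (n := n)
    (hk0 := niceKer_skb hb0 x) (hK1 := fun i => niceKer_skb (hb1 i) x)
    (hK2 := fun i j => niceKer_skb (hb2 i j) x)
    (g0 := fun η => dV (etv n) (unc u) (x,η))
    (g0' := fun η => dV (etv n) (dV (etv n) (unc u)) (x,η))
    (hg0 := fun s => hasDerivAt_slice (hu.dV' (etv n)).diffble x s)
    (hg0c := ((hu.dV' (etv n)).dV' (etv n)).continuous.comp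
      (continuous_const.prodMk continuous_id))
    (hg00 := hz1 x)
    (g1 := fun i η => dV (etv n) (dV (eiv i) (unc u)) (x,η))
    (g1' := fun i η => dV (etv n) (dV (etv n) (dV (eiv i) (unc u)))  (x,η))
    (hg1 := fun i s => hasDerivAt_slice ((hu.dV' (eiv i)).dV' (etv n)).diffble x s)
    (hg1c := fun i => (((hu.dV' (eiv i)).dV' (etv n)).dV' (etv n)).continuous.comp
      (continuous_const.prodMk continuous_id))
    (hg10 := fun i => by
      show dV (etv n) (dV (eiv i) (unc u)) (x, 0) = 0
      rw [dV_comm_fn hu (eiv i) (etv n)]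
      exact dV_vanish (hu.dV' (etv n)) hz1 i x)
    (g2 := fun i j η => dV (etv n) (dV (eiv i) (dV (eiv j) (unc u))) (x,η))
    (g2' := fun i j η => dV (etv n) (dV (etv n) (dV (eiv i) (dV (eiv j) (unc u)))) (x,η))
    (hg2 := fun i j s =>
      hasDerivAt_slice (((hu.dV' (eiv j)).dV' (eiv i)).dV' (etv n)).diffble x s)
    (hg2c := fun i j => ((((hu.dV' (eiv j)).dV' (eiv i)).dV' (etv n)).dV' (etv n)).continuous.comp
      (continuous_const.prodMk continuous_id))
    (hg20 := fun i j => by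
      show dV (etv n) (dV (eiv i) (dV (eiv j) (unc u))) (x, 0) = 0
      rw [dV_comm_fn (hu.dV' (eiv j)) (eiv i) (etv n)]
      refine dV_vanish ((hu.dV' (eiv j)).dV' (etv n)) (fun y => ?_) i x
      rw [dV_comm_fn hu (eiv j) (etv n)]
      exact dV_vanish (hu.dV' (etv n)) hz1 j y)
    t

/-- The system (3.15) satisfied by u₂ = ∂ₜ²u. -/
theorem stmt4
    {n : ℕ} (hn : 1 ≤ n) (Ω : Set (Fin n → ℝ))
    (hΩo : IsOpen Ω) (hΩb : Bornology.IsBounded Ω)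
    (aij : Fin n → Fin n → (Fin n → ℝ) → ℝ) (ha : CoeffOK aij)
    (T : ℝ) (hT : 0 < T)
    (b0 : (Fin n → ℝ) → ℝ → ℝ → ℝ)
    (b1 : Fin n → (Fin n → ℝ) → ℝ → ℝ → ℝ)
    (b2 : Fin n → Fin n → (Fin n → ℝ) → ℝ → ℝ → ℝ)
    (hb0 : SmoothBdd3 b0) (hb1 : ∀ i, SmoothBdd3 (b1 i))
    (hb2 : ∀ i j, SmoothBdd3 (b2 i j))
    (R : (Fin n → ℝ) → ℝ → ℝ) (hR : SmoothBdd2 R)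
    (f : (Fin n → ℝ) → ℝ) (hf : ContDiff ℝ (⊤ : ℕ∞) f)
    (hfs : ∀ x, x ∉ Ω → f x = 0)
    (u : (Fin n → ℝ) → ℝ → ℝ)
    (hu : ContDiff ℝ (⊤ : ℕ∞) (fun p : (Fin n → ℝ) × ℝ => u p.1 p.2))
    (hus : ∀ x t, x ∉ Ω → u x t = 0)
    (hpde : ∀ x ∈ Ω, ∀ t ∈ Set.Ioo (0:ℝ) T,
      tder 2 u x t = opA aij (fun y => u y t) x + memTerm b0 b1 b2 u x t + R x t * f x)
    (hinit : ∀ x, u x 0 = 0 ∧ tder 1 u x 0 = 0) :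
    (∀ x ∈ Ω, ∀ t ∈ Set.Ioo (0:ℝ) T,
      tder 2 (tder 2 u) x t
        = opA aij (fun y => tder 2 u y t) x
          + memTerm (ker1 (ker1 b0)) (fun i => ker1 (ker1 (b1 i)))
              (fun i j => ker1 (ker1 (b2 i j))) (tder 2 u) x t
          + deriv^[2] (fun s => R x s) t * f x) ∧
    (∀ x ∈ Ω, tder 2 u x 0 = R x 0 * f x
      ∧ tder 1 (tder 2 u) x 0 = deriv (fun s => R x s) 0 * f x) := by
  have hU : ContDiff ℝ (⊤:ℕ∞) (unc u) := hu
  have hRu : ContDiff ℝ (⊤:ℕ∞) (unc R) := hR.1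
  have haijd : ∀ i j, Differentiable ℝ (aij i j) := fun i j => (ha.2.1 i j).differentiable one_ne_zero
  have hF1s : ContDiff ℝ (⊤:ℕ∞) (dV (etv n) (unc u)) := hU.dV' _
  have hF2s : ContDiff ℝ (⊤:ℕ∞) (dV (etv n) (dV (etv n) (unc u))) := hF1s.dV' _
  have hF3s : ContDiff ℝ (⊤:ℕ∞) (dV (etv n) (dV (etv n) (dV (etv n) (unc u)))) := hF2s.dV' _
  have htd1 : ∀ y s, tder 1 u y s = dV (etv n) (unc u) (y, s) := by
    intro y s
    rw [tder_eq u hU 1 y s, Function.iterate_one]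
  have htd2 : ∀ y s, tder 2 u y s = dV (etv n) (dV (etv n) (unc u)) (y, s) := by
    intro y s
    rw [tder_eq u hU 2 y s, Function.iterate_succ_apply, Function.iterate_one]
  have hz0 : ∀ y, unc u (y, 0) = 0 := fun y => (hinit y).1
  have hz1 : ∀ y, dV (etv n) (unc u) (y, 0) = 0 := fun y => by
    rw [← htd1]; exact (hinit y).2
  have hphi : ∀ x, (fun s => tder 2 u x s) = fun s => dV (etv n) (dV (etv n) (unc u)) (x,s) :=
    fun x => funext fun s => htd2 x s
  -- derivative facts, valid for every x and t
  have hA0 : ∀ (x : Fin n → ℝ) (t : ℝ), HasDerivAt (fun s => opA aij (fun y => u y s) x)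
      (opA aij (fun y => dV (etv n) (unc u) (y,t)) x) t :=
    fun x t => hasDerivAt_opA aij haijd hU x t
  have hA1 : ∀ (x : Fin n → ℝ) (t : ℝ),
      HasDerivAt (fun s => opA aij (fun y => dV (etv n) (unc u) (y,s)) x)
      (opA aij (fun y => dV (etv n) (dV (etv n) (unc u)) (y,t)) x) t :=
    fun x t => hasDerivAt_opA aij haijd hF1s x t
  have hr0 : ∀ (x : Fin n → ℝ) (t : ℝ), HasDerivAt (fun s => R x s * f x)
      (dV (etv n) (unc R) (x,t) * f x) t :=
    fun x t => (hasDerivAt_slice hRu.diffble x t).mul_const (f x)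
  have hr1 : ∀ (x : Fin n → ℝ) (t : ℝ), HasDerivAt (fun s => dV (etv n) (unc R) (x,s) * f x)
      (dV (etv n) (dV (etv n) (unc R)) (x,t) * f x) t :=
    fun x t => (hasDerivAt_slice (hRu.dV' _).diffble x t).mul_const (f x)
  have hM0 := memD1 hb0 hb1 hb2 hU hz0
  have hM1 := memD2 hb0 hb1 hb2 hU hz1
  -- first differentiation of the PDE
  have step1 : ∀ x ∈ Ω, ∀ t ∈ Set.Ioo (0:ℝ) T,
      dV (etv n) (dV (etv n) (dV (etv n) (unc u))) (x,t)
        = opA aij (fun y => dV (etv n) (unc u) (y,t)) x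
          + (∫ η in (0:ℝ)..t, (skb b0 x t η * dV (etv n) (unc u) (x,η)
              + (∑ i, skb (b1 i) x t η * dV (etv n) (dV (eiv i) (unc u)) (x,η))
              + ∑ i, ∑ j, skb (b2 i j) x t η
                  * dV (etv n) (dV (eiv i) (dV (eiv j) (unc u))) (x,η)))
          + dV (etv n) (unc R) (x,t) * f x := by
    intro x hx t ht
    have hφ : HasDerivAt (fun s => tder 2 u x s)
        (dV (etv n) (dV (etv n) (dV (etv n) (unc u))) (x,t)) t := by
      rw [hphi x]
      exact hasDerivAt_slice hF2s.diffble x t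
    have hψ := ((hA0 x t).add (hM0 x t)).add (hr0 x t)
    exact deriv_eq_on_Ioo ht (fun s hs => hpde x hx s hs) hφ hψ
  -- second differentiation of the PDE
  have step2 : ∀ x ∈ Ω, ∀ t ∈ Set.Ioo (0:ℝ) T,
      dV (etv n) (dV (etv n) (dV (etv n) (dV (etv n) (unc u)))) (x,t)
        = opA aij (fun y => dV (etv n) (dV (etv n) (unc u)) (y,t)) x
          + (∫ η in (0:ℝ)..t, (sker (skb b0 x) (skb' b0 x) t η
                * dV (etv n) (dV (etv n) (unc u)) (x,η)
              + (∑ i, sker (skb (b1 i) x) (skb' (b1 i) x) t η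
                  * dV (etv n) (dV (etv n) (dV (eiv i) (unc u))) (x,η))
              + ∑ i, ∑ j, sker (skb (b2 i j) x) (skb' (b2 i j) x) t η
                  * dV (etv n) (dV (etv n) (dV (eiv i) (dV (eiv j) (unc u)))) (x,η)))
          + dV (etv n) (dV (etv n) (unc R)) (x,t) * f x := by
    intro x hx t ht
    have hφ : HasDerivAt (fun s => dV (etv n) (dV (etv n) (dV (etv n) (unc u))) (x,s))
        (dV (etv n) (dV (etv n) (dV (etv n) (dV (etv n) (unc u)))) (x,t)) t :=
      hasDerivAt_slice hF3s.diffble x t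
    have hψ := ((hA1 x t).add (hM1 x t)).add (hr1 x t)
    exact deriv_eq_on_Ioo ht (fun s hs => step1 x hx s hs) hφ hψ
  refine ⟨fun x hx t ht => ?_, fun x hx => ⟨?_, ?_⟩⟩
  · -- main equation
    have e0 : tder 2 (tder 2 u) x t
        = dV (etv n) (dV (etv n) (dV (etv n) (dV (etv n) (unc u)))) (x,t) := by
      show deriv^[2] (fun s => tder 2 u x s) t = _
      rw [hphi x, deriv_iter_slice hF2s 2 x t, Function.iterate_succ_apply,
        Function.iterate_one]
    have e1 : opA aij (fun y => tder 2 u y t) x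
        = opA aij (fun y => dV (etv n) (dV (etv n) (unc u)) (y,t)) x := by
      congr 1
      funext y
      exact htd2 y t
    have e3 : deriv^[2] (fun s => R x s) t = dV (etv n) (dV (etv n) (unc R)) (x,t) := by
      rw [show (fun s => R x s) = fun s => unc R (x,s) from rfl,
        deriv_iter_slice hRu 2 x t, Function.iterate_succ_apply, Function.iterate_one]
    have e2 : memTerm (ker1 (ker1 b0)) (fun i => ker1 (ker1 (b1 i)))
          (fun i j => ker1 (ker1 (b2 i j))) (tder 2 u) x t
        = ∫ η in (0:ℝ)..t, (sker (skb b0 x) (skb' b0 x) t η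
                * dV (etv n) (dV (etv n) (unc u)) (x,η)
              + (∑ i, sker (skb (b1 i) x) (skb' (b1 i) x) t η
                  * dV (etv n) (dV (etv n) (dV (eiv i) (unc u))) (x,η))
              + ∑ i, ∑ j, sker (skb (b2 i j) x) (skb' (b2 i j) x) t η
                  * dV (etv n) (dV (etv n) (dV (eiv i) (dV (eiv j) (unc u)))) (x,η)) := by
      simp only [memTerm]
      apply intervalIntegral.integral_congr
      intro η _
      have k0e : ker1 (ker1 b0) x t η = sker (skb b0 x) (skb' b0 x) t η := by
        rw [ker2_skb hb0 x]
      have k1e : ∀ i, ker1 (ker1 (b1 i)) x t η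
          = sker (skb (b1 i) x) (skb' (b1 i) x) t η := fun i => by
        rw [ker2_skb (hb1 i) x]
      have k2e : ∀ i j, ker1 (ker1 (b2 i j)) x t η
          = sker (skb (b2 i j) x) (skb' (b2 i j) x) t η := fun i j => by
        rw [ker2_skb (hb2 i j) x]
      have v0 : tder 2 u x η = dV (etv n) (dV (etv n) (unc u)) (x,η) := htd2 x η
      have v1 : ∀ i, pd i (fun y => tder 2 u y η) x
          = dV (etv n) (dV (etv n) (dV (eiv i) (unc u))) (x,η) := by
        intro i
        have h1 : (fun y => tder 2 u y η)
            = fun y => dV (etv n) (dV (etv n) (unc u)) (y,η) := funext fun y => htd2 y η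
        rw [h1, pd_slice (hF2s.diffble (x,η)) i]
        rw [show ((Pi.single i 1 : Fin n → ℝ), (0:ℝ)) = eiv i from rfl]
        rw [dV_swap hF1s (etv n) (eiv i) (x,η), dV_comm_fn hU (etv n) (eiv i)]
      have v2 : ∀ i j, pd i (pd j (fun y => tder 2 u y η)) x
          = dV (etv n) (dV (etv n) (dV (eiv i) (dV (eiv j) (unc u)))) (x,η) := by
        intro i j
        have h1 : (fun y => tder 2 u y η)
            = fun y => dV (etv n) (dV (etv n) (unc u)) (y,η) := funext fun y => htd2 y η
        rw [h1]
        have h2 : pd j (fun y => dV (etv n) (dV (etv n) (unc u)) (y,η))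
            = fun y => dV (eiv j) (dV (etv n) (dV (etv n) (unc u))) (y,η) := by
          funext y
          rw [pd_slice (hF2s.diffble (y,η)) j]
        rw [h2, pd_slice ((hF2s.dV' (eiv j)).diffble (x,η)) i]
        rw [show ((Pi.single i 1 : Fin n → ℝ), (0:ℝ)) = eiv i from rfl]
        rw [dV_comm_fn hF1s (etv n) (eiv j), dV_comm_fn hU (etv n) (eiv j)]
        rw [dV_swap ((hU.dV' (eiv j)).dV' (etv n)) (etv n) (eiv i) (x,η)]
        rw [dV_comm_fn (hU.dV' (eiv j)) (etv n) (eiv i)]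
      simp only [k0e, k1e, k2e, v0, v1, v2]
    rw [e0, e1, e2, e3]
    exact step2 x hx t ht
  · -- first initial condition
    have hcφ : ContinuousAt (fun s => tder 2 u x s) 0 := by
      rw [hphi x]
      exact (hF2s.continuous.comp (continuous_const.prodMk continuous_id)).continuousAt
    have hcψ : ContinuousAt (fun s => opA aij (fun y => u y s) x
        + memTerm b0 b1 b2 u x s + R x s * f x) 0 :=
      ((hA0 x 0).continuousAt.add (hM0 x 0).continuousAt).add (hr0 x 0).continuousAt
    have h00 := eq_at_zero hT hcφ hcψ (fun t ht => hpde x hx t ht)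
    have hA00 : opA aij (fun y => u y 0) x = 0 := by
      rw [show (fun y => u y 0) = fun _ : Fin n → ℝ => (0:ℝ) from funext fun y => (hinit y).1]
      exact opA_zero aij x
    have hMz : memTerm b0 b1 b2 u x 0 = 0 := by
      simp [memTerm]
    simp only [hA00, hMz, zero_add, add_zero] at h00
    exact h00
  · -- second initial condition
    have hL : tder 1 (tder 2 u) x 0
        = dV (etv n) (dV (etv n) (dV (etv n) (unc u))) (x,0) := by
      show deriv^[1] (fun s => tder 2 u x s) 0 = _
      rw [Function.iterate_one, hphi x]
      exact (hasDerivAt_slice hF2s.diffble x 0).deriv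
    have hcφ : ContinuousAt (fun s =>
        dV (etv n) (dV (etv n) (dV (etv n) (unc u))) (x,s)) 0 :=
      (hF3s.continuous.comp (continuous_const.prodMk continuous_id)).continuousAt
    have hcψ : ContinuousAt (fun s => opA aij (fun y => dV (etv n) (unc u) (y,s)) x
        + (∫ η in (0:ℝ)..s, (skb b0 x s η * dV (etv n) (unc u) (x,η)
            + (∑ i, skb (b1 i) x s η * dV (etv n) (dV (eiv i) (unc u)) (x,η))
            + ∑ i, ∑ j, skb (b2 i j) x s η
                * dV (etv n) (dV (eiv i) (dV (eiv j) (unc u))) (x,η)))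
        + dV (etv n) (unc R) (x,s) * f x) 0 :=
      ((hA1 x 0).continuousAt.add (hM1 x 0).continuousAt).add (hr1 x 0).continuousAt
    have h00 := eq_at_zero hT hcφ hcψ (fun t ht => step1 x hx t ht)
    have hA10 : opA aij (fun y => dV (etv n) (unc u) (y,(0:ℝ))) x = 0 := by
      rw [show (fun y => dV (etv n) (unc u) (y,(0:ℝ)))
        = fun _ : Fin n → ℝ => (0:ℝ) from funext fun y => hz1 y]
      exact opA_zero aij x
    have hMz : (∫ η in (0:ℝ)..(0:ℝ), (skb b0 x 0 η * dV (etv n) (unc u) (x,η)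
            + (∑ i, skb (b1 i) x 0 η * dV (etv n) (dV (eiv i) (unc u)) (x,η))
            + ∑ i, ∑ j, skb (b2 i j) x 0 η
                * dV (etv n) (dV (eiv i) (dV (eiv j) (unc u))) (x,η))) = 0 :=
      intervalIntegral.integral_same
    have hRd : deriv (fun s => R x s) 0 = dV (etv n) (unc R) (x,0) :=
      (hasDerivAt_slice hRu.diffble x 0).deriv
    rw [hL, hRd]
    simp only [hA10, hMz, zero_add, add_zero] at h00
    exact h00
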